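/- arXiv:2209.10306 — 8 statements merged into one kernel-verified Lean document; each statement's English description precedes it below -/
import Mathlib

section
/- Let α be a type (alphabet), let k ≥ 1, and let R : (Fin k → List α) → Prop be an arbitrary acceptance predicate on k-tuples of words. Define the family 𝔏 = {L : Set (List α) | there exists f : Fin k → List α with f i ∈ L for all i and R f} (the hyperlanguage of an ∃^k quantification condition with underlying acceptance predicate R). Then for every L ∈ 𝔏 there is a nonempty finite subset S ⊆ L with at most k elements such that S ∈ 𝔏. Consequently, for every language L with more than k elements, 𝔏 ≠ {L}. -/
/-- The hyperlanguage of an `∃^k` quantification condition with underlying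
acceptance predicate `R` on `k`-tuples of words. -/
def existsHyperlanguage {α : Type*} (k : ℕ) (R : (Fin k → List α) → Prop) :
    Set (Set (List α)) :=
  {L | ∃ f : Fin k → List α, (∀ i, f i ∈ L) ∧ R f}

/-!
A witness tuple `f` for `L ∈ existsHyperlanguage k R` also witnesses membership of its own
range, a subset of `L` with at most `k` elements. So every member of the hyperlanguage contains
a member of size at most `k`; if the hyperlanguage were `{L}` with `|L| > k`, that member would
have to be `L` itself.
-/

theorem Set.encard_range_le {ι β : Type*} (f : ι → β) : (Set.range f).encard ≤ ENat.card ι := by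
  rw [← Set.image_univ, ← Set.encard_univ]
  exact Set.encard_image_le f _

namespace existsHyperlanguage

variable {α : Type*} {k : ℕ} {R : (Fin k → List α) → Prop}

theorem range_mem {f : Fin k → List α} (hf : R f) : Set.range f ∈ existsHyperlanguage k R :=
  ⟨f, Set.mem_range_self, hf⟩

theorem exists_range_subset_mem {L : Set (List α)} (hL : L ∈ existsHyperlanguage k R) :
    ∃ f : Fin k → List α, Set.range f ⊆ L ∧ Set.range f ∈ existsHyperlanguage k R := by
  obtain ⟨f, hfL, hf⟩ := hL
  exact ⟨f, Set.range_subset_iff.2 hfL, range_mem hf⟩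

theorem ne_singleton_of_lt_encard {L : Set (List α)} (hL : (k : ℕ∞) < L.encard) :
    existsHyperlanguage k R ≠ {L} := by
  intro h
  obtain ⟨f, -, hf⟩ := exists_range_subset_mem (h ▸ Set.mem_singleton L)
  rw [h, Set.mem_singleton_iff] at hf
  have hle : L.encard ≤ k := by simpa [hf] using Set.encard_range_le f
  exact hle.not_gt hL

end existsHyperlanguage

theorem existsHyperlanguage_small_subset_and_not_singleton
    {α : Type*} (k : ℕ) (hk : 1 ≤ k) (R : (Fin k → List α) → Prop) :
    (∀ L ∈ existsHyperlanguage k R, ∃ S : Set (List α), S ⊆ L ∧ S.Nonempty ∧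
      S.Finite ∧ S.encard ≤ (k : ℕ∞) ∧ S ∈ existsHyperlanguage k R) ∧
    (∀ L : Set (List α), (k : ℕ∞) < L.encard → existsHyperlanguage k R ≠ {L}) := by
  refine ⟨fun L hL => ?_, fun L => existsHyperlanguage.ne_singleton_of_lt_encard⟩
  obtain ⟨f, hfL, hf⟩ := existsHyperlanguage.exists_range_subset_mem hL
  have hcard : (Set.range f).encard ≤ k := by simpa using Set.encard_range_le f
  exact ⟨Set.range f, hfL, Set.range_nonempty_iff_nonempty.2 ⟨⟨0, hk⟩⟩, Set.finite_range f,
    hcard, hf⟩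
end

section
/- Let α be a type (alphabet), let k ≥ 1 and m ≥ 0, and let R : (Fin k → List α) → (Fin m → List α) → Prop be an arbitrary acceptance predicate. Define 𝔏 = {L : Set (List α) | L is nonempty and there exists x : Fin k → List α with x i ∈ L for all i, such that for every y : Fin m → List α with y j ∈ L for all j, R x y holds} (the hyperlanguage of an ∃^k∀^m quantification condition). Then for every L ∈ 𝔏, the set S = Set.range x for a witnessing x is a nonempty subset of L with at most k elements satisfying S ∈ 𝔏. Consequently, for every language L with more than k elements, 𝔏 ≠ {L}. -/
/-! The `∃`-witnesses `x` of a language `L` in the hyperlanguage already span a member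
`Set.range x` of it, since the universal condition only gets weaker on a sublanguage.
That member has at most `k` words, so a language with more than `k` words is never the
only member. -/

/-- The hyperlanguage of an `∃^k∀^m` quantification condition with underlying
acceptance predicate `R`. -/
def existsForallHyperlanguage {α : Type*} (k m : ℕ)
    (R : (Fin k → List α) → (Fin m → List α) → Prop) : Set (Set (List α)) :=
  {L | L.Nonempty ∧ ∃ x : Fin k → List α, (∀ i, x i ∈ L) ∧
    ∀ y : Fin m → List α, (∀ j, y j ∈ L) → R x y}

open Set

theorem encard_range_le_enatCard {ι β : Type*} (f : ι → β) :
    (range f).encard ≤ ENat.card ι := by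
  rw [← image_univ, ← encard_univ]
  exact encard_image_le f univ

theorem encard_range_fin_le {β : Type*} {k : ℕ} (x : Fin k → β) : (range x).encard ≤ k := by
  simpa using encard_range_le_enatCard x

section

variable {α : Type*} {k m : ℕ} {R : (Fin k → List α) → (Fin m → List α) → Prop}

theorem range_mem_existsForallHyperlanguage (hk : 1 ≤ k) {L : Set (List α)}
    {x : Fin k → List α} (hx : ∀ i, x i ∈ L) (hR : ∀ y, (∀ j, y j ∈ L) → R x y) :
    range x ∈ existsForallHyperlanguage k m R :=
  have : Nonempty (Fin k) := Fin.pos_iff_nonempty.mp hk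
  ⟨range_nonempty x, x, mem_range_self, fun y hy => hR y fun j => range_subset_iff.mpr hx (hy j)⟩

theorem existsForallHyperlanguage_ne_singleton (hk : 1 ≤ k) {L : Set (List α)}
    (hL : (k : ℕ∞) < L.encard) : existsForallHyperlanguage k m R ≠ {L} := by
  intro hsingle
  obtain ⟨-, x, hx, hR⟩ : L ∈ existsForallHyperlanguage k m R := hsingle ▸ rfl
  have hrange : range x = L := by
    simpa [hsingle] using range_mem_existsForallHyperlanguage (m := m) hk hx hR
  exact (encard_range_fin_le x).not_gt (hrange ▸ hL)

end

theorem existsForallHyperlanguage_range_witness_and_not_singleton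
    {α : Type*} (k m : ℕ) (hk : 1 ≤ k)
    (R : (Fin k → List α) → (Fin m → List α) → Prop) :
    (∀ L ∈ existsForallHyperlanguage k m R, ∀ x : Fin k → List α,
      (∀ i, x i ∈ L) → (∀ y : Fin m → List α, (∀ j, y j ∈ L) → R x y) →
      (Set.range x).Nonempty ∧ Set.range x ⊆ L ∧
        (Set.range x).encard ≤ (k : ℕ∞) ∧
        Set.range x ∈ existsForallHyperlanguage k m R) ∧
    (∀ L : Set (List α), (k : ℕ∞) < L.encard →
      existsForallHyperlanguage k m R ≠ {L}) := by
  refine ⟨fun L _ x hx hR => ?_, fun L hL => existsForallHyperlanguage_ne_singleton hk hL⟩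
  have hmem := range_mem_existsForallHyperlanguage hk hx hR
  exact ⟨hmem.1, range_subset_iff.mpr hx, encard_range_fin_le x, hmem⟩
end

section
/- Let W be a type, let L : Set W be an infinite set, and let R : W → W → Prop be a relation such that for every w ∈ L there exists u ∈ L with R w u. Then there exists a set S with S ⊆ L, S ≠ L, S nonempty, and such that for every w ∈ S there exists u ∈ S with R w u. -/
/-!
Choose `f` mapping `L` into itself with `R w (f w)` on `L`; every forward orbit of `f` is then
an `R`-closed subset of `L`.
If the orbit of some `x ∈ L` is all of `L`, the orbit of `f x` cannot be: otherwise `x` would be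
periodic and `L` finite.
-/

open Function Set

namespace Function

theorem IsPeriodicPt.finite_range_iterate {α : Type*} {f : α → α} {n : ℕ} {x : α}
    (hx : IsPeriodicPt f n x) (hn : 0 < n) : (range fun m => f^[m] x).Finite := by
  refine (finite_range fun k : Fin n => f^[k] x).subset ?_
  rintro _ ⟨m, rfl⟩
  exact ⟨⟨m % n, Nat.mod_lt m hn⟩, hx.iterate_mod_apply m⟩

theorem mapsTo_range_iterate {α : Type*} (f : α → α) (x : α) :
    MapsTo f (range fun m => f^[m] x) (range fun m => f^[m] x) := by
  rintro _ ⟨m, rfl⟩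
  exact ⟨m + 1, iterate_succ_apply' f m x⟩

end Function

theorem Set.Infinite.exists_ssubset_nonempty_mapsTo {α : Type*} {f : α → α} {L : Set α}
    (hL : L.Infinite) (hf : MapsTo f L L) :
    ∃ S ⊂ L, S.Nonempty ∧ MapsTo f S S := by
  let orbit : α → Set α := fun y => range fun m => f^[m] y
  have orbit_subset {y} (hy : y ∈ L) : orbit y ⊆ L := by
    rintro _ ⟨m, rfl⟩
    exact hf.iterate m hy
  have orbit_nonempty (y : α) : (orbit y).Nonempty := ⟨y, 0, rfl⟩
  obtain ⟨x, hx⟩ := hL.nonempty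
  by_cases hxL : orbit x = L
  · refine ⟨orbit (f x), (orbit_subset (hf hx)).ssubset_of_ne fun hfxL => hL ?_,
      orbit_nonempty _, mapsTo_range_iterate f _⟩
    obtain ⟨m, hm⟩ : x ∈ orbit (f x) := hfxL ▸ hx
    have hper : IsPeriodicPt f (m + 1) x := by
      exact (iterate_succ_apply f m x).trans hm
    exact hxL ▸ hper.finite_range_iterate m.succ_pos
  · exact ⟨orbit x, (orbit_subset hx).ssubset_of_ne hxL, orbit_nonempty x,
      mapsTo_range_iterate f x⟩

theorem infinite_forall_exists_proper_subset {W : Type*} (L : Set W)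
    (hL : L.Infinite) (R : W → W → Prop) (h : ∀ w ∈ L, ∃ u ∈ L, R w u) :
    ∃ S : Set W, S ⊆ L ∧ S ≠ L ∧ S.Nonempty ∧ ∀ w ∈ S, ∃ u ∈ S, R w u := by
  have : Nonempty W := ⟨hL.nonempty.some⟩
  choose! f hfL hfR using h
  obtain ⟨S, hSL, hS, hSf⟩ := hL.exists_ssubset_nonempty_mapsTo hfL
  exact ⟨S, hSL.subset, hSL.ne, hS, fun w hw => ⟨f w, hSf hw, hfR w (hSL.subset hw)⟩⟩
end

section
/- Let α be a type (alphabet) and let L : Set (List α) be an infinite language. For words u, v over α, say that a word p over Option α × Option α is the padded pairing of (u, v) if List.map Prod.fst p = List.map some u ++ List.replicate (v.length - u.length) none and List.map Prod.snd p = List.map some v ++ List.replicate (u.length - v.length) none (truncated subtraction). Then for every language P over Option α × Option α, the family {L' : Set (List α) | L' is nonempty and for every u ∈ L' there exists v ∈ L' and p ∈ P such that p is the padded pairing of (u, v)} is not equal to {L}. -/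
/-- `p` is the padded pairing of the pair of words `(u, v)`: its first
components spell `u` padded at the end with `none` up to the length of `v`,
and its second components spell `v` padded at the end with `none` up to the
length of `u`. -/
def IsPaddedPairing {α : Type*} (u v : List α)
    (p : List (Option α × Option α)) : Prop :=
  p.map Prod.fst = u.map some ++ List.replicate (v.length - u.length) none ∧
  p.map Prod.snd = v.map some ++ List.replicate (u.length - v.length) none

/-!
Only the shape of the condition matters: for any relation `R` (here "some `p ∈ P` pads `(u, v)`"),
suppose `L` were the only nonempty set in which every word has an `R`-successor. Choosing an
`R`-successor `g u ∈ L` for each `u ∈ L`, every forward `g`-orbit inside `L` is again such a set,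
hence equal to `L`. In particular the orbit of `g a` contains `a`, so `a` is `g`-periodic and its
orbit `L` is finite.
-/

open Function Set

theorem Function.IsPeriodicPt.finite_range_iterate_s5 {β : Type*} {f : β → β} {n : ℕ} {x : β}
    (h : IsPeriodicPt f n x) (hn : 0 < n) : (range fun m => f^[m] x).Finite :=
  (finite_range fun m : Fin n => f^[m] x).subset <|
    range_subset_iff.2 fun m => ⟨⟨m % n, Nat.mod_lt m hn⟩, h.iterate_mod_apply m⟩

def successorClosedSets {β : Type*} (R : β → β → Prop) : Set (Set β) :=
  {S | S.Nonempty ∧ ∀ u ∈ S, ∃ v ∈ S, R u v}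

section

variable {β : Type*} {R : β → β → Prop} {L : Set β}

theorem range_iterate_mem_successorClosedSets {g : β → β} (hgL : MapsTo g L L)
    (hgR : ∀ u ∈ L, R u (g u)) {a : β} (ha : a ∈ L) :
    range (fun n => g^[n] a) ∈ successorClosedSets R := by
  refine ⟨⟨a, 0, rfl⟩, ?_⟩
  rintro _ ⟨n, rfl⟩
  refine ⟨g^[n + 1] a, ⟨n + 1, rfl⟩, ?_⟩
  rw [iterate_succ_apply']
  exact hgR _ (hgL.iterate n ha)

theorem successorClosedSets_ne_singleton (hL : L.Infinite) : successorClosedSets R ≠ {L} := by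
  intro h
  obtain ⟨⟨a, ha⟩, hsucc⟩ : L ∈ successorClosedSets R := h ▸ rfl
  choose! g hgL hgR using hsucc
  have horbit : ∀ b ∈ L, range (fun n => g^[n] b) = L := fun b hb => by
    simpa [h] using range_iterate_mem_successorClosedSets hgL hgR hb
  obtain ⟨k, hk⟩ : a ∈ range (fun n => g^[n] (g a)) := (horbit _ (hgL a ha)).symm ▸ ha
  have hper : IsPeriodicPt g (k + 1) a := by
    rwa [IsPeriodicPt, IsFixedPt, iterate_succ_apply]
  exact hL (horbit a ha ▸ hper.finite_range_iterate_s5 k.succ_pos)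

end

theorem infinite_not_forall_exists_realizable {α : Type*}
    (L : Set (List α)) (hL : L.Infinite)
    (P : Set (List (Option α × Option α))) :
    {L' : Set (List α) | L'.Nonempty ∧ ∀ u ∈ L', ∃ v ∈ L', ∃ p ∈ P,
      IsPaddedPairing u v p} ≠ {L} :=
  successorClosedSets_ne_singleton (R := fun u v => ∃ p ∈ P, IsPaddedPairing u v p) hL
end

section
/- Let α be a finite type (alphabet) with decidable equality and let L : Set (List α) be a finite nonempty language. For words u, v over α, say that a word p over Option α × Option α is the padded pairing of (u, v) if List.map Prod.fst p = List.map some u ++ List.replicate (v.length - u.length) none and List.map Prod.snd p = List.map some v ++ List.replicate (u.length - v.length) none (truncated subtraction). Then there exists a regular language P over the alphabet Option α × Option α such that for every language L' over α: (L' is nonempty and for every u ∈ L' there exists v ∈ L' and p ∈ P with p the padded pairing of (u, v)) if and only if L' = L. -/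
/-- By Myhill–Nerode: every left quotient is either empty or the quotient by one of the finitely
many prefixes of words of `P`. -/
theorem Language.isRegular_of_finite {β : Type*} {P : Language β}
    (hP : Set.Finite (P : Set (List β))) : P.IsRegular := by
  refine IsRegular.of_finite_range_leftQuotient ?_
  have hprefixes : {x | ∃ w ∈ P, x <+: w}.Finite := by
    refine (hP.biUnion fun w _ => w.inits.finite_toSet).subset ?_
    rintro x ⟨w, hw, hxw⟩
    exact Set.mem_biUnion hw ((List.mem_inits x w).mpr hxw)
  refine ((hprefixes.image P.leftQuotient).insert 0).subset ?_
  rintro _ ⟨x, rfl⟩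
  by_cases hx : ∃ w ∈ P, x <+: w
  · exact Or.inr ⟨x, hx, rfl⟩
  · exact Or.inl <| Set.eq_empty_of_forall_notMem fun y hy =>
      hx ⟨x ++ y, hy, List.prefix_append x y⟩

open Fin.NatCast in
theorem Fin.eq_univ_of_mapsTo_add_one {n : ℕ} [NeZero n] {s : Set (Fin n)}
    (hne : s.Nonempty) (h : Set.MapsTo (· + 1) s s) : s = Set.univ := by
  obtain ⟨x, hx⟩ := hne
  have hreach : ∀ k : ℕ, x + k ∈ s := by
    intro k
    induction k with
    | zero => simpa using hx
    | succ k ih => simpa [add_assoc] using h ih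
  refine Set.eq_univ_of_forall fun y => ?_
  simpa using hreach (y - x : Fin n)

theorem Set.Finite.exists_cyclic_self_map {β : Type*} {s : Set β} (hs : s.Finite)
    (hne : s.Nonempty) :
    ∃ f : β → β, Set.MapsTo f s s ∧ ∀ t ⊆ s, t.Nonempty → Set.MapsTo f t t → t = s := by
  classical
  have := hs.to_subtype
  have := hne.to_subtype
  obtain ⟨e⟩ : Nonempty (s ≃ Fin (Nat.card s)) := ⟨Finite.equivFin s⟩
  let f : β → β := fun x => if hx : x ∈ s then e.symm (e ⟨x, hx⟩ + 1) else x
  have hf : ∀ x : s, f x = e.symm (e x + 1) := fun x => dif_pos x.2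
  refine ⟨f, fun x hx => by simp only [f, dif_pos hx, Subtype.coe_prop], fun t hts htne ht => ?_⟩
  have hunion : (fun i => (e.symm i : β)) ⁻¹' t = Set.univ := by
    refine Fin.eq_univ_of_mapsTo_add_one ?_ fun i hi => ?_
    · obtain ⟨x, hx⟩ := htne
      exact ⟨e ⟨x, hts hx⟩, by rwa [Set.mem_preimage, e.symm_apply_apply]⟩
    · have := ht hi
      rwa [hf, e.apply_symm_apply] at this
  refine hts.antisymm fun x hx => ?_
  have := hunion.symm.subset (Set.mem_univ (e ⟨x, hx⟩))
  rwa [Set.mem_preimage, e.symm_apply_apply] at this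

section PaddedPairing

variable {α : Type*}

theorem IsPaddedPairing.reduceOption_map_fst {u v : List α} {p : List (Option α × Option α)}
    (h : IsPaddedPairing u v p) : (p.map Prod.fst).reduceOption = u := by
  rw [h.1]
  simp [List.reduceOption]

theorem IsPaddedPairing.reduceOption_map_snd {u v : List α} {p : List (Option α × Option α)}
    (h : IsPaddedPairing u v p) : (p.map Prod.snd).reduceOption = v := by
  rw [h.2]
  simp [List.reduceOption]

theorem IsPaddedPairing.unique {u v u' v' : List α}
    {p : List (Option α × Option α)} (h : IsPaddedPairing u v p)
    (h' : IsPaddedPairing u' v' p) : u = u' ∧ v = v' :=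
  ⟨h.reduceOption_map_fst.symm.trans h'.reduceOption_map_fst,
    h.reduceOption_map_snd.symm.trans h'.reduceOption_map_snd⟩

def paddedPairing (u v : List α) : List (Option α × Option α) :=
  List.zip (u.map some ++ List.replicate (v.length - u.length) none)
    (v.map some ++ List.replicate (u.length - v.length) none)

theorem isPaddedPairing_paddedPairing (u v : List α) :
    IsPaddedPairing u v (paddedPairing u v) := by
  constructor
  · rw [paddedPairing, List.map_fst_zip]
    simp; omega
  · rw [paddedPairing, List.map_snd_zip]
    simp; omega

end PaddedPairing

theorem finite_language_forall_exists_realizable_general {α : Type*} (L : Set (List α)) (hfin : L.Finite)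
    (hne : L.Nonempty) :
    ∃ P : Language (Option α × Option α), P.IsRegular ∧
      ∀ L' : Set (List α),
        (L'.Nonempty ∧ ∀ u ∈ L', ∃ v ∈ L', ∃ p ∈ P, IsPaddedPairing u v p) ↔
          L' = L := by
  obtain ⟨next, hnext, hcyclic⟩ := hfin.exists_cyclic_self_map hne
  refine ⟨(fun u => paddedPairing u (next u)) '' L,
    Language.isRegular_of_finite (hfin.image _), fun L' => ⟨?_, ?_⟩⟩
  · rintro ⟨hne', hstep⟩
    have hsucc : ∀ u ∈ L', u ∈ L ∧ next u ∈ L' := by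
      intro u hu
      obtain ⟨v, hv, _, ⟨w, hw, rfl⟩, hp⟩ := hstep u hu
      obtain ⟨rfl, rfl⟩ := hp.unique (isPaddedPairing_paddedPairing w (next w))
      exact ⟨hw, hv⟩
    exact hcyclic L' (fun u hu => (hsucc u hu).1) hne' fun u hu => (hsucc u hu).2
  · rintro rfl
    exact ⟨hne, fun u hu =>
      ⟨next u, hnext hu, _, ⟨u, hu, rfl⟩, isPaddedPairing_paddedPairing u (next u)⟩⟩

theorem finite_language_forall_exists_realizable {α : Type*} [Fintype α]
    [DecidableEq α] (L : Set (List α)) (hfin : L.Finite) (hne : L.Nonempty) :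
    ∃ P : Language (Option α × Option α), P.IsRegular ∧
      ∀ L' : Set (List α),
        (L'.Nonempty ∧ ∀ u ∈ L', ∃ v ∈ L', ∃ p ∈ P, IsPaddedPairing u v p) ↔
          L' = L :=
  finite_language_forall_exists_realizable_general L hfin hne
end

section
/- Let α be a type (alphabet), let σ be a finite type of states with n = Fintype.card σ, let A : DFA α σ, and let L = A.accepts. Define the relation Step on words by: Step u v iff there exist words x, c, y with u = x ++ y, v = x ++ c ++ y, c ≠ [], c.length ≤ n, and v ∈ L. Then for every w ∈ L there exists w₀ ∈ L with w₀.length < n and Relation.ReflTransGen Step w₀ w. -/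
/-! By the pumping lemma, an accepted word of length at least the number of states has a nonempty
factor of length at most that number whose deletion (pumping it zero times) leaves an accepted
word. Deleting such factors strictly shortens the word, so repeating this reaches an accepted word
shorter than the number of states, and reading the deletions backwards gives the insertion chain. -/

namespace Language

variable {α : Type*}

def InsertionStep (L : Language α) (n : ℕ) (u v : List α) : Prop :=
  ∃ x c y : List α, u = x ++ y ∧ v = x ++ c ++ y ∧ c ≠ [] ∧ c.length ≤ n ∧ v ∈ L

theorem exists_short_reflTransGen_insertionStep {L : Language α} {n : ℕ}
    (hdel : ∀ w ∈ L, n ≤ w.length →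
      ∃ x c y : List α, w = x ++ c ++ y ∧ c ≠ [] ∧ c.length ≤ n ∧ x ++ y ∈ L)
    (w : List α) (hw : w ∈ L) :
    ∃ w₀ ∈ L, w₀.length < n ∧ Relation.ReflTransGen (L.InsertionStep n) w₀ w := by
  induction w using (measure List.length).wf.induction with
  | h w ih =>
    by_cases hshort : w.length < n
    · exact ⟨w, hw, hshort, .refl⟩
    obtain ⟨x, c, y, rfl, hc, hcn, hxy⟩ := hdel w hw (not_lt.mp hshort)
    have hlt : (x ++ y).length < (x ++ c ++ y).length := by
      simp only [List.length_append]
      have := List.length_pos_iff.mpr hc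
      omega
    obtain ⟨w₀, hw₀, hw₀n, hrel⟩ := ih (x ++ y) hlt hxy
    exact ⟨w₀, hw₀, hw₀n, hrel.tail ⟨x, c, y, rfl, rfl, hc, hcn, hw⟩⟩

end Language

theorem DFA.exists_deletion_mem_accepts {α σ : Type*} [Fintype σ] {A : DFA α σ}
    {w : List α} (hw : w ∈ A.accepts) (hlen : Fintype.card σ ≤ w.length) :
    ∃ x c y : List α, w = x ++ c ++ y ∧ c ≠ [] ∧ c.length ≤ Fintype.card σ ∧
      x ++ y ∈ A.accepts := by
  obtain ⟨x, c, y, rfl, hxc, hc, hpump⟩ := A.pumping_lemma hw hlen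
  refine ⟨x, c, y, rfl, hc, le_of_add_le_right hxc, hpump ?_⟩
  exact ⟨x, ⟨x, rfl, [], Language.nil_mem_kstar _, List.append_nil x⟩, y, rfl, rfl⟩

theorem regular_language_pumping_order {α : Type*} {σ : Type*} [Fintype σ]
    (A : DFA α σ) :
    ∀ w ∈ A.accepts, ∃ w₀ ∈ A.accepts, w₀.length < Fintype.card σ ∧
      Relation.ReflTransGen
        (fun u v : List α => ∃ x c y : List α, u = x ++ y ∧ v = x ++ c ++ y ∧
          c ≠ [] ∧ c.length ≤ Fintype.card σ ∧ v ∈ A.accepts)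
        w₀ w :=
  Language.exists_short_reflTransGen_insertionStep fun _ hw hlen =>
    A.exists_deletion_mem_accepts hw hlen
end

section
/- Let α be a type (alphabet), let k ≥ 1, and let H : Set (List (Fin k → Option α)) be an arbitrary language of word assignments. For a word p over Fin k → Option α, define its i-th projection as List.reduceOption (List.map (fun g => g i) p). Say that a language L : Set (List α) satisfies the ∀^k condition with respect to H iff L is nonempty and for every f : Fin k → List α with f i ∈ L for all i, there exists p ∈ H whose i-th projection equals f i for every i. Then there exists a language L satisfying the ∀^k condition with respect to H if and only if there exists a single word w : List α such that the singleton language {w} satisfies the ∀^k condition with respect to H. -/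
/-- The `i`-th projection of a word assignment: the word over `α` obtained
from the `i`-th components after deleting the padding symbols `none`. -/
def wordProj {α : Type*} {k : ℕ} (p : List (Fin k → Option α)) (i : Fin k) :
    List α :=
  (p.map (fun g => g i)).reduceOption

/-- `L` satisfies the `∀^k` condition with respect to the word-assignment
language `H`. -/
def SatForall {α : Type*} (k : ℕ) (H : Set (List (Fin k → Option α)))
    (L : Set (List α)) : Prop :=
  L.Nonempty ∧ ∀ f : Fin k → List α, (∀ i, f i ∈ L) →
    ∃ p ∈ H, ∀ i : Fin k, wordProj p i = f i

theorem SatForall.mono {α : Type*} {k : ℕ} {H : Set (List (Fin k → Option α))}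
    {L L' : Set (List α)} (hL : SatForall k H L) (hL' : L'.Nonempty) (hsub : L' ⊆ L) :
    SatForall k H L' :=
  ⟨hL', fun f hf => hL.2 f fun i => hsub (hf i)⟩

theorem SatForall.singleton_of_mem {α : Type*} {k : ℕ} {H : Set (List (Fin k → Option α))}
    {L : Set (List α)} {w : List α} (hL : SatForall k H L) (hw : w ∈ L) :
    SatForall k H {w} :=
  hL.mono (Set.singleton_nonempty w) (Set.singleton_subset_iff.mpr hw)

theorem forall_cfhg_nonempty_iff_singleton_general {α : Type*} (k : ℕ)
    (H : Set (List (Fin k → Option α))) :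
    (∃ L : Set (List α), SatForall k H L) ↔
      ∃ w : List α, SatForall k H {w} := by
  constructor
  · rintro ⟨L, hL⟩
    obtain ⟨w, hw⟩ := hL.1
    exact ⟨w, hL.singleton_of_mem hw⟩
  · rintro ⟨w, hw⟩
    exact ⟨{w}, hw⟩

theorem forall_cfhg_nonempty_iff_singleton {α : Type*} (k : ℕ) (hk : 1 ≤ k)
    (H : Set (List (Fin k → Option α))) :
    (∃ L : Set (List α), SatForall k H L) ↔
      ∃ w : List α, SatForall k H {w} :=
  forall_cfhg_nonempty_iff_singleton_general k H
end

section
/- Let α be a type (alphabet), let m ≥ 0, and let H : Set (List (Fin (m+1) → Option α)) be an arbitrary language of word assignments, where coordinate 0 corresponds to an existential variable and coordinates 1,…,m to universal variables. For a word p over Fin (m+1) → Option α and i : Fin (m+1), define its i-th projection as List.reduceOption (List.map (fun g => g i) p). Say that a language L : Set (List α) satisfies the ∃∀^m condition with respect to H iff L is nonempty and there exists w ∈ L such that for every g : Fin m → List α with g j ∈ L for all j, there exists p ∈ H whose 0-th projection equals w and whose (j+1)-th projection equals g j for every j : Fin m. Then there exists a language L satisfying the ∃∀^m condition with respect to H if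 and only if there exists a word w : List α such that the singleton language {w} satisfies the ∃∀^m condition with respect to H. -/
/-- `L` satisfies the `∃∀^m` condition with respect to the word-assignment
language `H`: coordinate `0` is the existential variable and coordinates
`1, …, m` are the universal variables. -/
def SatExistsForall {α : Type*} (m : ℕ)
    (H : Set (List (Fin (m + 1) → Option α))) (L : Set (List α)) : Prop :=
  L.Nonempty ∧ ∃ w ∈ L, ∀ g : Fin m → List α, (∀ j, g j ∈ L) →
    ∃ p ∈ H, wordProj p 0 = w ∧ ∀ j : Fin m, wordProj p j.succ = g j

/-- The witness `w` of `L` also witnesses `{w}`: the universal words then all equal `w ∈ L`. -/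
theorem SatExistsForall.exists_singleton {α : Type*} {m : ℕ}
    {H : Set (List (Fin (m + 1) → Option α))} {L : Set (List α)}
    (h : SatExistsForall m H L) : ∃ w ∈ L, SatExistsForall m H {w} := by
  obtain ⟨-, w, hwL, hw⟩ := h
  exact ⟨w, hwL, Set.singleton_nonempty w, w, rfl, fun g hg => hw g fun j => hg j ▸ hwL⟩

theorem exists_forall_cfhg_nonempty_iff_singleton {α : Type*} (m : ℕ)
    (H : Set (List (Fin (m + 1) → Option α))) :
    (∃ L : Set (List α), SatExistsForall m H L) ↔
      ∃ w : List α, SatExistsForall m H {w} :=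
  ⟨fun ⟨_, h⟩ => (h.exists_singleton).imp fun _ hw => hw.2, fun ⟨w, h⟩ => ⟨{w}, h⟩⟩
end
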